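/- Let p be an odd prime and let r be a divisor of p−1 with r > 1, and let Γ = G(2p,r). Then: (1) Γ is a Cayley graph of the dihedral group of order 2p (in particular Aut(Γ) contains a dihedral subgroup of order 2p acting regularly on the vertices), and hence Γ is a bicirculant; (2) Γ is a circulant if and only if r is even. -/

import Mathlib

open SimpleGraph

namespace ATB

variable {V : Type*}

/-- `σ` is an automorphism of the graph `Γ`. -/
def IsAut (Γ : SimpleGraph V) (σ : Equiv.Perm V) : Prop :=
  ∀ u v : V, Γ.Adj (σ u) (σ v) ↔ Γ.Adj u v

/-- The full automorphism group of `Γ`, as a subgroup of `Equiv.Perm V`. -/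
def autGroup (Γ : SimpleGraph V) : Subgroup (Equiv.Perm V) where
  carrier := {σ | IsAut Γ σ}
  one_mem' := by intro u v; simp
  mul_mem' := by
    intro a b ha hb u v
    rw [show ((a * b) u) = a (b u) from rfl, show ((a * b) v) = a (b v) from rfl,
      ha (b u) (b v), hb u v]
  inv_mem' := by
    intro a ha u v
    have h := ha (a⁻¹ u) (a⁻¹ v)
    erw [Equiv.apply_symm_apply, Equiv.apply_symm_apply] at h
    exact h.symm

/-- `G` is transitive on the vertices. -/
def VertexTrans (G : Subgroup (Equiv.Perm V)) : Prop := ∀ u v : V, ∃ σ ∈ G, σ u = v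

/-- `G` is transitive on the arcs (ordered pairs of adjacent vertices) of `Γ`. -/
def ArcTrans (Γ : SimpleGraph V) (G : Subgroup (Equiv.Perm V)) : Prop :=
  ∀ u v u' v' : V, Γ.Adj u v → Γ.Adj u' v' → ∃ σ ∈ G, σ u = u' ∧ σ v = v'

/-- `Γ` is arc-transitive (with respect to its full automorphism group). -/
def IsArcTransitive (Γ : SimpleGraph V) : Prop := ArcTrans Γ (autGroup Γ)

/-- A circulant graph: there is an automorphism of order `|V|` acting transitively,
i.e. a cyclic subgroup of the automorphism group acting regularly on the vertices. -/
def IsCirculant (Γ : SimpleGraph V) : Prop :=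
  ∃ σ : Equiv.Perm V, IsAut Γ σ ∧ orderOf σ = Nat.card V ∧
    ∀ v w : V, ∃ k : ℕ, (σ ^ k) v = w

/-- A bicirculant graph on `2n` vertices: an automorphism of order `n` with exactly two
orbits (necessarily both of length `n`). -/
def IsBicirculant (Γ : SimpleGraph V) : Prop :=
  ∃ σ : Equiv.Perm V, IsAut Γ σ ∧ 2 * orderOf σ = Nat.card V ∧
    ∃ v w : V, (∀ u : V, (∃ k : ℕ, (σ ^ k) v = u) ∨ (∃ k : ℕ, (σ ^ k) w = u)) ∧
      ∀ k : ℕ, (σ ^ k) v ≠ w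

/-- The orbit of `v` under a subgroup `H` of permutations. -/
def orb (H : Subgroup (Equiv.Perm V)) (v : V) : Set V := {w | ∃ σ ∈ H, σ v = w}

/-- `H` acts semiregularly: only the identity fixes a point. -/
def Semiregular (H : Subgroup (Equiv.Perm V)) : Prop :=
  ∀ σ ∈ H, σ ≠ 1 → ∀ v : V, σ v ≠ v

/-- `H` acts regularly on the vertices. -/
def RegularOn (H : Subgroup (Equiv.Perm V)) : Prop := VertexTrans H ∧ Semiregular H

/-- `H` has exactly two orbits, namely those of `v` and `w`. -/
def TwoOrbits (H : Subgroup (Equiv.Perm V)) (v w : V) : Prop :=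
  w ∉ orb H v ∧ ∀ u : V, u ∈ orb H v ∨ u ∈ orb H w

/-- `N` is a normal subgroup of `G`. -/
def NormalIn (N G : Subgroup (Equiv.Perm V)) : Prop :=
  N ≤ G ∧ ∀ g ∈ G, ∀ x ∈ N, g * x * g⁻¹ ∈ N

/-- `N` has at most `k` orbits. -/
def AtMostOrbits (N : Subgroup (Equiv.Perm V)) (k : ℕ) : Prop :=
  ∃ f : Fin k → V, ∀ v : V, ∃ i, v ∈ orb N (f i)

/-- `N` has at least three orbits. -/
def AtLeastThreeOrbits (N : Subgroup (Equiv.Perm V)) : Prop :=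
  ∃ a b c : V, b ∉ orb N a ∧ c ∉ orb N a ∧ c ∉ orb N b

/-- `G` is quasiprimitive: transitive, and every nontrivial normal subgroup is transitive. -/
def Quasiprimitive (G : Subgroup (Equiv.Perm V)) : Prop :=
  VertexTrans G ∧ ∀ N : Subgroup (Equiv.Perm V), NormalIn N G → N ≠ ⊥ → VertexTrans N

/-- `G` is bi-quasiprimitive: transitive, every nontrivial normal subgroup has at most
two orbits, and some nontrivial normal subgroup has exactly two orbits. -/
def BiQuasiprimitive (G : Subgroup (Equiv.Perm V)) : Prop :=
  VertexTrans G ∧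
    (∀ N : Subgroup (Equiv.Perm V), NormalIn N G → N ≠ ⊥ → AtMostOrbits N 2) ∧
    ∃ N : Subgroup (Equiv.Perm V), NormalIn N G ∧ N ≠ ⊥ ∧ ∃ v w : V, TwoOrbits N v w

/-- `B` is a block for the action of `G`. -/
def IsBlockFor (G : Subgroup (Equiv.Perm V)) (B : Set V) : Prop :=
  ∀ σ ∈ G, ⇑σ '' B = B ∨ Disjoint (⇑σ '' B) B

/-- `G` is primitive: transitive and every block is trivial. -/
def Primitive (G : Subgroup (Equiv.Perm V)) : Prop :=
  VertexTrans G ∧ ∀ B : Set V, IsBlockFor G B → B.Subsingleton ∨ B = Set.univ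

/-- `G` is 2-transitive on the vertices. -/
def TwoTrans (G : Subgroup (Equiv.Perm V)) : Prop :=
  ∀ u v u' v' : V, u ≠ v → u' ≠ v' → ∃ σ ∈ G, σ u = u' ∧ σ v = v'

/-- `G` is 2-transitive on the subset `Δ`. -/
def TwoTransOn (G : Subgroup (Equiv.Perm V)) (Δ : Set V) : Prop :=
  ∀ u ∈ Δ, ∀ v ∈ Δ, ∀ u' ∈ Δ, ∀ v' ∈ Δ, u ≠ v → u' ≠ v' →
    ∃ σ ∈ G, σ u = u' ∧ σ v = v'

/-- `G` is transitive on the subset `Δ`. -/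
def TransOn (G : Subgroup (Equiv.Perm V)) (Δ : Set V) : Prop :=
  ∀ u ∈ Δ, ∀ v ∈ Δ, ∃ σ ∈ G, σ u = v

/-- `G` acts faithfully on the subset `Δ`. -/
def FaithfulOn (G : Subgroup (Equiv.Perm V)) (Δ : Set V) : Prop :=
  ∀ σ ∈ G, (∀ v ∈ Δ, σ v = v) → σ = 1

/-- `Δ₀, Δ₁` form a bipartition of the graph `Γ`. -/
structure IsBipartition (Γ : SimpleGraph V) (Δ₀ Δ₁ : Set V) : Prop where
  covers : Δ₀ ∪ Δ₁ = Set.univ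
  disj : Disjoint Δ₀ Δ₁
  not_adj₀ : ∀ u ∈ Δ₀, ∀ v ∈ Δ₀, ¬Γ.Adj u v
  not_adj₁ : ∀ u ∈ Δ₁, ∀ v ∈ Δ₁, ¬Γ.Adj u v

/-- The setwise stabilizer of `Δ` in `G`. -/
def setStab (G : Subgroup (Equiv.Perm V)) (Δ : Set V) : Subgroup (Equiv.Perm V) where
  carrier := {σ | σ ∈ G ∧ ⇑σ '' Δ = Δ}
  one_mem' := ⟨G.one_mem, by simp⟩
  mul_mem' := by
    rintro a b ⟨haG, haΔ⟩ ⟨hbG, hbΔ⟩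
    refine ⟨G.mul_mem haG hbG, ?_⟩
    rw [show ⇑(a * b) = ⇑a ∘ ⇑b from rfl, Set.image_comp, hbΔ, haΔ]
  inv_mem' := by
    rintro a ⟨haG, haΔ⟩
    refine ⟨G.inv_mem haG, ?_⟩
    conv_lhs => rw [← haΔ]
    rw [show ⇑a⁻¹ = ⇑a.symm from rfl]
    exact Equiv.symm_image_image a Δ

/-- The subgroup of `G` stabilizing both `Δ₀` and `Δ₁` setwise (`G⁺`). -/
def plusStab (G : Subgroup (Equiv.Perm V)) (Δ₀ Δ₁ : Set V) : Subgroup (Equiv.Perm V) :=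
  setStab (setStab G Δ₀) Δ₁

/-- The stabilizer of the point `v` in `G`. -/
def stabPt (G : Subgroup (Equiv.Perm V)) (v : V) : Subgroup (Equiv.Perm V) :=
  setStab G {v}

/-- A transitive group `G` has rank `k`: every point stabilizer has exactly `k` orbits. -/
def HasRank (G : Subgroup (Equiv.Perm V)) (k : ℕ) : Prop :=
  ∀ v : V, ∃ f : Fin k → V,
    (∀ i j : Fin k, i ≠ j → f j ∉ orb (stabPt G v) (f i)) ∧
    ∀ u : V, ∃ i : Fin k, u ∈ orb (stabPt G v) (f i)

/-- `G` is of affine type over `GF(2)`: it has a regular normal subgroup of exponent 2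
(an elementary abelian 2-group); equivalently `G` embeds in `AGL(m,2)` in its natural action. -/
def AffineTypeTwo (G : Subgroup (Equiv.Perm V)) : Prop :=
  ∃ N : Subgroup (Equiv.Perm V), NormalIn N G ∧ RegularOn N ∧ ∀ σ ∈ N, σ * σ = 1

/-- `P` is a `G`-invariant partition of the vertex set. -/
structure IsInvPartition (G : Subgroup (Equiv.Perm V)) (P : Set (Set V)) : Prop where
  nonempty : ∀ B ∈ P, B.Nonempty
  covers : ∀ v : V, ∃ B ∈ P, v ∈ B
  disj : ∀ B ∈ P, ∀ C ∈ P, B ≠ C → Disjoint B C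
  inv : ∀ σ ∈ G, ∀ B ∈ P, ⇑σ '' B ∈ P

/-- `Q` is a block for the induced action of `G` on the partition `P`. -/
def PartBlock (G : Subgroup (Equiv.Perm V)) (P Q : Set (Set V)) : Prop :=
  Q ⊆ P ∧ ∀ σ ∈ G,
    (fun B => ⇑σ '' B) '' Q = Q ∨ Disjoint ((fun B => ⇑σ '' B) '' Q) Q

/-- `G` is transitive on the parts of `P`. -/
def TransOnParts (G : Subgroup (Equiv.Perm V)) (P : Set (Set V)) : Prop :=
  ∀ B ∈ P, ∀ C ∈ P, ∃ σ ∈ G, ⇑σ '' B = C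

/-- The induced action of `G` on the partition `P` is primitive. -/
def PrimitiveOnParts (G : Subgroup (Equiv.Perm V)) (P : Set (Set V)) : Prop :=
  TransOnParts G P ∧ ∀ Q : Set (Set V), PartBlock G P Q → Q.Subsingleton ∨ Q = P

/-- `G` acts faithfully on the partition `P`. -/
def FaithfulOnParts (G : Subgroup (Equiv.Perm V)) (P : Set (Set V)) : Prop :=
  ∀ σ ∈ G, (∀ B ∈ P, ⇑σ '' B = B) → σ = 1

/-- The induced action of `G` on the partition `P` is 2-transitive. -/
def TwoTransOnParts (G : Subgroup (Equiv.Perm V)) (P : Set (Set V)) : Prop :=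
  ∀ B ∈ P, ∀ C ∈ P, ∀ B' ∈ P, ∀ C' ∈ P, B ≠ C → B' ≠ C' →
    ∃ σ ∈ G, ⇑σ '' B = B' ∧ ⇑σ '' C = C'

/-- `H` has exactly two orbits of equal size on the subset `Δ`. -/
def TwoEqualOrbitsOn (H : Subgroup (Equiv.Perm V)) (Δ : Set V) : Prop :=
  ∃ a ∈ Δ, ∃ b ∈ Δ, orb H a ∪ orb H b = Δ ∧ Disjoint (orb H a) (orb H b) ∧
    (orb H a).ncard = (orb H b).ncard

/-- `G` is almost simple: it has a nonabelian simple normal subgroup with trivial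
centralizer, i.e. `S ≤ G ≤ Aut(S)` for a nonabelian simple group `S`. -/
def AlmostSimple (G : Subgroup (Equiv.Perm V)) : Prop :=
  ∃ S : Subgroup (Equiv.Perm V), S ≤ G ∧ (∀ g ∈ G, ∀ s ∈ S, g * s * g⁻¹ ∈ S) ∧
    IsSimpleGroup ↥S ∧ (∃ a ∈ S, ∃ b ∈ S, a * b ≠ b * a) ∧
    ∀ g ∈ G, (∀ s ∈ S, g * s = s * g) → g = 1

/-- The setoid on `V` whose classes are the orbits of `N`. -/
def orbSetoid (N : Subgroup (Equiv.Perm V)) : Setoid V where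
  r u v := ∃ σ ∈ N, σ u = v
  iseqv := by
    refine ⟨fun u => ⟨1, N.one_mem, rfl⟩, ?_, ?_⟩
    · rintro u v ⟨σ, hσ, rfl⟩
      exact ⟨σ⁻¹, N.inv_mem hσ, Equiv.symm_apply_apply σ u⟩
    · rintro u v w ⟨σ, hσ, rfl⟩ ⟨τ, hτ, rfl⟩
      exact ⟨τ * σ, N.mul_mem hτ hσ, rfl⟩

/-- The set of orbits of `N` on `V`. -/
abbrev orbQuot (N : Subgroup (Equiv.Perm V)) : Type _ := Quotient (orbSetoid N)

/-- The orbit of `v`, as a vertex of the quotient. -/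
def cls (N : Subgroup (Equiv.Perm V)) (v : V) : orbQuot N := Quotient.mk (orbSetoid N) v

/-- The quotient graph of `Γ` by a partition given as a setoid: parts are adjacent
iff some vertex of one is adjacent to some vertex of the other. -/
def setoidQuot (Γ : SimpleGraph V) (s : Setoid V) : SimpleGraph (Quotient s) where
  Adj A B := A ≠ B ∧ ∃ u v : V, Γ.Adj u v ∧ Quotient.mk s u = A ∧ Quotient.mk s v = B
  symm := by
    constructor
    rintro A B ⟨hne, u, v, h, hu, hv⟩
    exact ⟨hne.symm, v, u, h.symm, hv, hu⟩
  loopless := by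
    constructor
    rintro A ⟨hne, -⟩
    exact hne rfl

/-- The quotient graph `Γ_N` of `Γ` by the orbits of `N`. -/
def quotGraph (Γ : SimpleGraph V) (N : Subgroup (Equiv.Perm V)) : SimpleGraph (orbQuot N) :=
  setoidQuot Γ (orbSetoid N)

/-- `Γ` is an `r`-cover of the quotient graph `Γ_N`: for every edge `{B,C}` of `Γ_N`
and every `v ∈ B`, `v` has exactly `r` neighbours in `C`. -/
def IsRCover (Γ : SimpleGraph V) (N : Subgroup (Equiv.Perm V)) (r : ℕ) : Prop :=
  ∀ (v : V) (C : orbQuot N), (quotGraph Γ N).Adj (cls N v) C →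
    {u : V | Γ.Adj v u ∧ cls N u = C}.ncard = r

/-! ## The particular graphs -/

/-- The complete multipartite graph with `m` parts of size `b`. -/
def completeMultipartite (m b : ℕ) : SimpleGraph (Fin m × Fin b) :=
  SimpleGraph.fromRel fun u v => u.1 ≠ v.1

/-- `K_{n,n}` minus a perfect matching. -/
def knnMinus (n : ℕ) : SimpleGraph (Fin n ⊕ Fin n) :=
  SimpleGraph.fromRel fun u v => ∃ i j : Fin n, i ≠ j ∧ u = Sum.inl i ∧ v = Sum.inr j

/-- The graph `G(2p,r)`: bipartite on two copies of `Z_p`, with `x ~ y'` iff `y - x`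
lies in the unique subgroup of order `r` of the multiplicative group (the solutions
of `z^r = 1`). -/
def graphG (p r : ℕ) : SimpleGraph (ZMod p ⊕ ZMod p) :=
  SimpleGraph.fromRel fun u v =>
    ∃ x y : ZMod p, u = Sum.inl x ∧ v = Sum.inr y ∧ (y - x) ^ r = 1

/-- The circulant `Cay(p,e) = Cay(Z_p, S)` where `S` is the unique subgroup of order `e`
of the multiplicative group of `Z_p` (the solutions of `z^e = 1`). -/
def cayCirc (p e : ℕ) : SimpleGraph (ZMod p) :=
  SimpleGraph.fromRel fun x y => (y - x) ^ e = 1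

/-- The points (1-dimensional subspaces) of the projective space `PG(d-1,F)`. -/
def projPoint (F : Type*) [Field F] (d : ℕ) : Type _ :=
  {W : Submodule F (Fin d → F) // Module.finrank F W = 1}

/-- The hyperplanes (`(d-1)`-dimensional subspaces) of the projective space `PG(d-1,F)`. -/
def projHyp (F : Type*) [Field F] (d : ℕ) : Type _ :=
  {W : Submodule F (Fin d → F) // Module.finrank F W = d - 1}

/-- The point-hyperplane incidence graph `B(PG(d-1,q))`. -/
def BPG (F : Type*) [Field F] (d : ℕ) : SimpleGraph (projPoint F d ⊕ projHyp F d) :=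
  SimpleGraph.fromRel fun u v => ∃ (A : projPoint F d) (B : projHyp F d),
    u = Sum.inl A ∧ v = Sum.inr B ∧ A.1 ≤ B.1

/-- The point-hyperplane non-incidence graph `B'(PG(d-1,q))`. -/
def BPG' (F : Type*) [Field F] (d : ℕ) : SimpleGraph (projPoint F d ⊕ projHyp F d) :=
  SimpleGraph.fromRel fun u v => ∃ (A : projPoint F d) (B : projHyp F d),
    u = Sum.inl A ∧ v = Sum.inr B ∧ A.1 ⊓ B.1 = ⊥

/-- The nonzero quadratic residues modulo 11. -/
def quadRes11 : Set (ZMod 11) := {1, 3, 4, 5, 9}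

/-- The graph `B'(H(11))`: vertices are `Z_11` (left part) together with the translates
`R + i` of the residues `R` (right part, indexed by `i`), with `x` adjacent to `R + i`
iff `x ∉ R + i`. -/
def BH11' : SimpleGraph (ZMod 11 ⊕ ZMod 11) :=
  SimpleGraph.fromRel fun u v =>
    ∃ x i : ZMod 11, u = Sum.inl x ∧ v = Sum.inr i ∧ x - i ∉ quadRes11

/-- The Hamming graph `H(2,4)`. -/
def hamming24 : SimpleGraph (Fin 4 × Fin 4) :=
  SimpleGraph.fromRel fun u v => (u.1 = v.1 ∧ u.2 ≠ v.2) ∨ (u.1 ≠ v.1 ∧ u.2 = v.2)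

/-- The Petersen graph: the Kneser graph on 2-subsets of a 5-set. -/
def petersen : SimpleGraph {s : Finset (Fin 5) // s.card = 2} :=
  SimpleGraph.fromRel fun u v => Disjoint u.1 v.1

/-- The 5-dimensional hypercube graph. -/
def cube5 : SimpleGraph (Fin 5 → ZMod 2) :=
  SimpleGraph.fromRel fun x y => ∃! i : Fin 5, x i ≠ y i

/-- The antipodal pairing on the 5-cube. -/
def antipodal5 : Setoid (Fin 5 → ZMod 2) where
  r x y := y = x ∨ y = x + 1
  iseqv := by
    have key : ∀ x : Fin 5 → ZMod 2, x + 1 + 1 = x := by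
      intro x
      funext i
      show x i + 1 + 1 = x i
      have h : (1 + 1 : ZMod 2) = 0 := by decide
      rw [add_assoc, h, add_zero]
    refine ⟨fun x => Or.inl rfl, ?_, ?_⟩
    · rintro x y (rfl | rfl)
      · exact Or.inl rfl
      · exact Or.inr (key x).symm
    · rintro x y z (rfl | rfl) h2
      · exact h2
      · rcases h2 with rfl | rfl
        · exact Or.inr rfl
        · exact Or.inl (key x)

/-- The folded 5-cube: the quotient of the 5-cube by the antipodal pairing. -/
def foldedCube5 : SimpleGraph (Quotient antipodal5) := setoidQuot cube5 antipodal5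

/-- The Clebsch graph: the complement of the folded 5-cube. -/
def clebsch : SimpleGraph (Quotient antipodal5) := foldedCube5ᶜ

/-- The standard double cover of `Γ`. -/
def doubleCover (Γ : SimpleGraph V) : SimpleGraph (V × Bool) :=
  SimpleGraph.fromRel fun u v => Γ.Adj u.1 v.1 ∧ u.2 = true ∧ v.2 = false

/-- The swap `(x,i) ↦ (x, 3-i)` of the two levels of the standard double cover. -/
def swapPerm (V : Type*) : Equiv.Perm (V × Bool) :=
  Equiv.prodCongr (Equiv.refl V) ⟨Bool.not, Bool.not, Bool.not_not, Bool.not_not⟩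

/-- The Cayley graph of a group with connection set `S` (edges `{g, s*g}`). -/
def cayleyGraph {T : Type*} [Group T] (S : Set T) : SimpleGraph T :=
  SimpleGraph.fromRel fun g h => ∃ s ∈ S, h = s * g

/-! ## `PGL` and `PΓL` acting on projective points -/

/-- `g` is a `τ`-semilinear bijection. -/
def IsSemilinearBij (F : Type*) [Field F] (d : ℕ) (τ : F ≃+* F)
    (g : (Fin d → F) ≃ (Fin d → F)) : Prop :=
  (∀ x y : Fin d → F, g (x + y) = g x + g y) ∧
  ∀ (c : F) (x : Fin d → F), g (c • x) = τ c • g x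

/-- `g` is a linear bijection. -/
def IsLinearBij (F : Type*) [Field F] (d : ℕ) (g : (Fin d → F) ≃ (Fin d → F)) : Prop :=
  (∀ x y : Fin d → F, g (x + y) = g x + g y) ∧
  ∀ (c : F) (x : Fin d → F), g (c • x) = c • g x

/-- The permutation `π` of the projective points is induced by the bijection `g`. -/
def inducesProjMap (F : Type*) [Field F] (d : ℕ) (g : (Fin d → F) ≃ (Fin d → F))
    (π : Equiv.Perm (projPoint F d)) : Prop :=
  ∀ W : projPoint F d, ((π W).1 : Set (Fin d → F)) = ⇑g '' ((W.1 : Submodule F (Fin d → F)) : Set (Fin d → F))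

/-- `PΓL(d,F)` as a permutation group on the projective points: the permutations induced
by semilinear bijections. -/
def PGammaL (F : Type*) [Field F] (d : ℕ) : Subgroup (Equiv.Perm (projPoint F d)) where
  carrier := {π | ∃ (τ : F ≃+* F) (g : (Fin d → F) ≃ (Fin d → F)),
    IsSemilinearBij F d τ g ∧ inducesProjMap F d g π}
  one_mem' := ⟨RingEquiv.refl F, Equiv.refl _, ⟨fun _ _ => rfl, fun _ _ => rfl⟩,
    fun W => by simp [inducesProjMap]⟩
  mul_mem' := by
    rintro a b ⟨τa, ga, ⟨haAdd, haSmul⟩, hIa⟩ ⟨τb, gb, ⟨hbAdd, hbSmul⟩, hIb⟩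
    refine ⟨τb.trans τa, gb.trans ga, ⟨?_, ?_⟩, ?_⟩
    · intro x y
      simp only [Equiv.trans_apply, hbAdd, haAdd]
    · intro c x
      simp only [Equiv.trans_apply, hbSmul, haSmul, RingEquiv.trans_apply]
    · intro W
      have h2 := hIa (b W)
      have h := hIb W
      rw [show ((a * b) W) = a (b W) from rfl, h2, h,
        show ⇑(gb.trans ga) = ⇑ga ∘ ⇑gb from rfl, Set.image_comp]
  inv_mem' := by
    rintro a ⟨τ, g, ⟨hAdd, hSmul⟩, hI⟩
    refine ⟨τ.symm, g.symm, ⟨?_, ?_⟩, ?_⟩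
    · intro x y
      apply g.injective
      rw [hAdd, Equiv.apply_symm_apply, Equiv.apply_symm_apply, Equiv.apply_symm_apply]
    · intro c x
      apply g.injective
      rw [hSmul, Equiv.apply_symm_apply, Equiv.apply_symm_apply,
        RingEquiv.apply_symm_apply]
    · intro W
      have h := hI (a⁻¹ W)
      erw [Equiv.apply_symm_apply] at h
      rw [h, Equiv.symm_image_image]

/-- `PGL(d,F)` as a permutation group on the projective points: the permutations induced
by linear bijections. -/
def PGLsub (F : Type*) [Field F] (d : ℕ) : Subgroup (Equiv.Perm (projPoint F d)) where
  carrier := {π | ∃ g : (Fin d → F) ≃ (Fin d → F), IsLinearBij F d g ∧ inducesProjMap F d g π}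
  one_mem' := ⟨Equiv.refl _, ⟨fun _ _ => rfl, fun _ _ => rfl⟩, fun W => by simp [inducesProjMap]⟩
  mul_mem' := by
    rintro a b ⟨ga, ⟨haAdd, haSmul⟩, hIa⟩ ⟨gb, ⟨hbAdd, hbSmul⟩, hIb⟩
    refine ⟨gb.trans ga, ⟨?_, ?_⟩, ?_⟩
    · intro x y
      simp only [Equiv.trans_apply, hbAdd, haAdd]
    · intro c x
      simp only [Equiv.trans_apply, hbSmul, haSmul]
    · intro W
      have h2 := hIa (b W)
      have h := hIb W
      rw [show ((a * b) W) = a (b W) from rfl, h2, h,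
        show ⇑(gb.trans ga) = ⇑ga ∘ ⇑gb from rfl, Set.image_comp]
  inv_mem' := by
    rintro a ⟨g, ⟨hAdd, hSmul⟩, hI⟩
    refine ⟨g.symm, ⟨?_, ?_⟩, ?_⟩
    · intro x y
      apply g.injective
      rw [hAdd, Equiv.apply_symm_apply, Equiv.apply_symm_apply, Equiv.apply_symm_apply]
    · intro c x
      apply g.injective
      rw [hSmul, Equiv.apply_symm_apply, Equiv.apply_symm_apply]
    · intro W
      have h := hI (a⁻¹ W)
      erw [Equiv.apply_symm_apply] at h
      rw [h, Equiv.symm_image_image]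

/-- The graphs appearing in the main theorem (Theorem 1.1 (a)-(g)). -/
def IsBasicGraph {W : Type*} (Δ : SimpleGraph W) : Prop :=
  (∃ n : ℕ, 2 ≤ n ∧ Nonempty (Δ ≃g completeBipartiteGraph (Fin n) (Fin n))) ∨
  (∃ n : ℕ, 3 ≤ n ∧ Nonempty (Δ ≃g (⊤ : SimpleGraph (Fin n)))) ∨
  (∃ n : ℕ, 3 ≤ n ∧ Nonempty (Δ ≃g completeMultipartite n 2)) ∨
  (∃ n : ℕ, 3 ≤ n ∧ Nonempty (Δ ≃g knnMinus n)) ∨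
  (∃ p e : ℕ, p.Prime ∧ 1 < e ∧ e ∣ p - 1 ∧ Nonempty (Δ ≃g graphG p e)) ∨
  (∃ (F : Type) (iF : Field F) (_ : Finite F) (d : ℕ), 3 ≤ d ∧
    (Nonempty (Δ ≃g @BPG F iF d) ∨ Nonempty (Δ ≃g @BPG' F iF d))) ∨
  (∃ p e : ℕ, p.Prime ∧ 2 ∣ e ∧ e ∣ p - 1 ∧ Nonempty (Δ ≃g cayCirc p e)) ∨
  Nonempty (Δ ≃g BH11') ∨
  (Nonempty (Δ ≃g petersen) ∨ Nonempty (Δ ≃g petersenᶜ)) ∨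
  (Nonempty (Δ ≃g hamming24) ∨ Nonempty (Δ ≃g hamming24ᶜ)) ∨
  (Nonempty (Δ ≃g clebsch) ∨ Nonempty (Δ ≃g clebschᶜ))


/-!
The dihedral group of order `2p` acts regularly on `G(2p,r)`: `r i` by `x ↦ x - i` on both
copies of `ℤ_p`, `sr i` by `x ↦ i - x` exchanging them; its rotations make the graph a
bicirculant. If `r` is even then `L = -L`, so exchanging `x` and `x′` is an automorphism, and
composed with a rotation it generates a cyclic regular group of order `2p`.

Conversely, `G(2p,r)` is connected of valency `r < p`, so a `p`-group of automorphisms fixing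
a vertex fixes its neighbours (orbits have `p`-power length) and hence everything. A Sylow
`p`-subgroup of the automorphism group therefore has order `p` and is generated by the rotation
`ρ`. A cyclic regular automorphism `τ` of order `2p` can thus be conjugated so that `τ²`
generates `⟨ρ⟩`; then `τ` commutes with `ρ`, so it is `x ↦ (c + x)′, y′ ↦ d + y`, and adjacency
says `(c - d) - L = L`. Multiplying by a nontrivial `s ∈ L` gives `s (c - d) - L = L`, and since
distinct translates of `L` differ, `c = d`; so `-1 ∈ L` and `r` is even.
-/

lemma exists_pow_eq_one_ne_one {G : Type*} [Group G] [Finite G] {r : ℕ} (hr1 : 1 < r)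
    (hr : r ∣ Nat.card G) : ∃ g : G, g ^ r = 1 ∧ g ≠ 1 := by
  have : Fact r.minFac.Prime := ⟨Nat.minFac_prime hr1.ne'⟩
  obtain ⟨g, hg⟩ := exists_prime_orderOf_dvd_card' r.minFac ((Nat.minFac_dvd r).trans hr)
  refine ⟨g, orderOf_dvd_iff_pow_eq_one.mp (hg ▸ Nat.minFac_dvd r), fun h1 => ?_⟩
  rw [h1, orderOf_one] at hg
  exact (Nat.minFac_prime hr1.ne').one_lt.ne hg

lemma exists_conj_mem_sylow {G : Type*} [Group G] [Finite G] {p : ℕ} [Fact p.Prime]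
    (P : Sylow p G) {g : G} (hg : g ^ p = 1) : ∃ γ : G, γ * g * γ⁻¹ ∈ P := by
  have hgp : IsPGroup p (Subgroup.zpowers g) := IsPGroup.of_card_dvd_pow (n := 1) <| by
    rw [Nat.card_zpowers, pow_one]; exact orderOf_dvd_of_pow_eq_one hg
  obtain ⟨Q, hQ⟩ := hgp.exists_le_sylow
  obtain ⟨γ, hγ⟩ := MulAction.exists_smul_eq G Q P
  refine ⟨γ, ?_⟩
  have := Subgroup.smul_mem_pointwise_smul g (MulAut.conj γ) Q.toSubgroup
    (hQ (Subgroup.mem_zpowers g))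
  rwa [← Sylow.coe_subgroup_smul, hγ] at this

section PGroupAut

variable {Γ : SimpleGraph V} {p : ℕ}

lemma mem_of_reachable_of_adj_closed {F : Set V} (hF : ∀ u w, Γ.Adj u w → u ∈ F → w ∈ F)
    {u w : V} (huw : Γ.Reachable u w) (hu : u ∈ F) : w ∈ F := by
  rw [SimpleGraph.reachable_iff_reflTransGen] at huw
  induction huw with
  | refl => exact hu
  | tail _ hadj ih => exact hF _ _ hadj ih

variable [Finite V] [Fact p.Prime] {K : Subgroup (Equiv.Perm V)}

/-- The `K`-orbit of `w` lies in the neighbourhood of `u` and has `p`-power size. -/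
lemma apply_eq_self_of_adj_of_isPGroup (hK : K ≤ autGroup Γ) (hKp : IsPGroup p K) {u w : V}
    (hdeg : (Γ.neighborSet u).ncard < p) (hu : ∀ σ ∈ K, σ u = u) (huw : Γ.Adj u w) :
    ∀ σ ∈ K, σ w = w := by
  have horb : MulAction.orbit K w ⊆ Γ.neighborSet u := by
    rintro _ ⟨σ, rfl⟩
    rw [SimpleGraph.mem_neighborSet, ← hu σ σ.2]
    exact (hK σ.2 u w).2 huw
  obtain ⟨n, hn⟩ := hKp.card_orbit w
  have hn0 : n = 0 := by
    by_contra hn0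
    have := (Set.ncard_le_ncard horb (Set.toFinite _)).trans_lt hdeg
    rw [← Nat.card_coe_set_eq, hn] at this
    exact absurd this (not_lt.mpr (Nat.le_self_pow hn0 p))
  rw [hn0, pow_zero, Nat.card_coe_set_eq] at hn
  have hsub := Set.ncard_le_one_iff_subsingleton.mp hn.le
  exact fun σ hσ => hsub (MulAction.mem_orbit w ⟨σ, hσ⟩) (MulAction.mem_orbit_self w)

lemma eq_one_of_isPGroup_of_apply_eq_self (hconn : Γ.Connected)
    (hdeg : ∀ u, (Γ.neighborSet u).ncard < p) (hK : K ≤ autGroup Γ) (hKp : IsPGroup p K)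
    {v : V} (hv : ∀ σ ∈ K, σ v = v) {σ : Equiv.Perm V} (hσ : σ ∈ K) : σ = 1 := by
  ext u
  exact mem_of_reachable_of_adj_closed (F := {u | ∀ σ ∈ K, σ u = u})
    (fun u w huw hu => apply_eq_self_of_adj_of_isPGroup hK hKp (hdeg u) hu huw)
    (hconn v u) hv σ hσ

lemma card_le_of_isPGroup (hconn : Γ.Connected) (hdeg : ∀ u, (Γ.neighborSet u).ncard < p)
    (hK : K ≤ autGroup Γ) (hKp : IsPGroup p K) : Nat.card K ≤ Nat.card V := by
  obtain ⟨v⟩ := hconn.nonempty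
  refine Nat.card_le_card_of_injective (fun σ : K => (σ : Equiv.Perm V) v) fun σ τ h => ?_
  have := eq_one_of_isPGroup_of_apply_eq_self (K := K ⊓ MulAction.stabilizer _ v) hconn hdeg
    (inf_le_left.trans hK) (hKp.to_le inf_le_left) (fun σ hσ => hσ.2)
    (σ := (τ⁻¹ * σ : K)) ⟨(τ⁻¹ * σ).2, by simp [MulAction.mem_stabilizer_iff, h]⟩
  exact (inv_mul_eq_one.mp (Subtype.ext this)).symm

end PGroupAut

section RootsOfUnity

variable {p r : ℕ}

lemma exists_zmod_pow_eq_one_ne_one [Fact p.Prime] (hr1 : 1 < r) (hr : r ∣ p - 1) :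
    ∃ s : ZMod p, s ^ r = 1 ∧ s ≠ 1 := by
  obtain ⟨g, hg, hg1⟩ := exists_pow_eq_one_ne_one (G := (ZMod p)ˣ) hr1
    (by rwa [Nat.card_eq_fintype_card, ZMod.card_units])
  exact ⟨g, by rw [← Units.val_pow_eq_pow_val, hg, Units.val_one], fun h => hg1 (Units.ext h)⟩

/-- If `a ≠ b`, the set `L` of `r`-th roots of unity is invariant under translation by
`a - b`, whose multiples carry `1 ∈ L` to `0 ∉ L`. -/
lemma eq_of_forall_sub_pow_eq_one_iff [Fact p.Prime] (hr0 : r ≠ 0) {a b : ZMod p}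
    (h : ∀ x, (a - x) ^ r = 1 ↔ (b - x) ^ r = 1) : a = b := by
  by_contra hab
  have ht : a - b ≠ 0 := sub_ne_zero.mpr hab
  have hstep (z : ZMod p) (hz : z ^ r = 1) : (z + (a - b)) ^ r = 1 := by
    have := (h (b - z)).2 (by rwa [sub_sub_cancel])
    rwa [show a - (b - z) = z + (a - b) by ring] at this
  have hmul (n : ℕ) : (1 + n * (a - b)) ^ r = 1 := by
    induction n with
    | zero => simp
    | succ n ih => simpa [add_mul, add_assoc] using hstep _ ih
  have h0 := hmul (-(a - b)⁻¹).val
  rw [ZMod.natCast_zmod_val, neg_mul, inv_mul_cancel₀ ht, add_neg_cancel, zero_pow hr0] at h0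
  exact zero_ne_one h0

lemma even_of_forall_sub_pow_eq_one_iff [Fact p.Prime] (hodd : Odd p) (hr1 : 1 < r)
    (hr : r ∣ p - 1) {e : ZMod p} (he : ∀ y, (e - y) ^ r = 1 ↔ y ^ r = 1) : Even r := by
  have hr0 : r ≠ 0 := by omega
  obtain ⟨s, hs, hs1⟩ := exists_zmod_pow_eq_one_ne_one hr1 hr
  have hs0 : s ≠ 0 := by rintro rfl; simp [zero_pow hr0] at hs
  -- `s • L = L` turns `e - L = L` into `s * e - L = L`
  have hse : s * e = e := eq_of_forall_sub_pow_eq_one_iff hr0 fun y => by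
    calc (s * e - y) ^ r = 1 ↔ (e - y / s) ^ r = 1 := by
          rw [show s * e - y = s * (e - y / s) by field_simp, mul_pow, hs, one_mul]
      _ ↔ (y / s) ^ r = 1 := he _
      _ ↔ (e - y) ^ r = 1 := by rw [div_pow, hs, div_one, he]
  have he0 : e = 0 := by
    have : (s - 1) * e = 0 := by rw [sub_mul, hse, one_mul, sub_self]
    exact (mul_eq_zero.mp this).resolve_left (sub_ne_zero.mpr hs1)
  have hneg : (-1 : ZMod p) ^ r = 1 := (he (-1)).1 (by simp [he0])
  have : Fact (2 < p) := ⟨lt_of_le_of_ne (Fact.out : p.Prime).two_le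
    fun h => by subst h; exact absurd hodd (by decide)⟩
  by_contra hr
  rw [(Nat.not_even_iff_odd.mp hr).neg_one_pow] at hneg
  exact ZMod.neg_one_ne_one hneg

end RootsOfUnity

section GraphG

variable {p r : ℕ}

@[simp] lemma graphG_adj_inl_inr (x y : ZMod p) :
    (graphG p r).Adj (Sum.inl x) (Sum.inr y) ↔ (y - x) ^ r = 1 := by
  simp [graphG]

@[simp] lemma graphG_adj_inr_inl (x y : ZMod p) :
    (graphG p r).Adj (Sum.inr y) (Sum.inl x) ↔ (y - x) ^ r = 1 := by
  rw [SimpleGraph.adj_comm, graphG_adj_inl_inr]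

@[simp] lemma graphG_not_adj_inl_inl (x y : ZMod p) :
    ¬(graphG p r).Adj (Sum.inl x) (Sum.inl y) := by
  simp [graphG]

@[simp] lemma graphG_not_adj_inr_inr (x y : ZMod p) :
    ¬(graphG p r).Adj (Sum.inr x) (Sum.inr y) := by
  simp [graphG]

lemma card_zmod_sum_zmod (p : ℕ) [NeZero p] : Nat.card (ZMod p ⊕ ZMod p) = 2 * p := by
  rw [Nat.card_sum, Nat.card_zmod, two_mul]

lemma graphG_neighborSet_ncard_lt [Fact p.Prime] (hr0 : r ≠ 0) (v : ZMod p ⊕ ZMod p) :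
    ((graphG p r).neighborSet v).ncard < p := by
  have hside (f : ZMod p → ZMod p ⊕ ZMod p) (hf : Function.Injective f) (x : ZMod p)
      (hsub : (graphG p r).neighborSet v ⊆ Set.range f) (hx : ¬(graphG p r).Adj v (f x)) :
      ((graphG p r).neighborSet v).ncard < p := by
    calc _ < (Set.range f).ncard :=
          Set.ncard_lt_ncard ((Set.ssubset_iff_of_subset hsub).mpr ⟨f x, ⟨x, rfl⟩, hx⟩)
      _ = p := by rw [Set.ncard_range_of_injective hf, Nat.card_zmod]
  rcases v with x | x
  · refine hside Sum.inr Sum.inr_injective x ?_ (by simp [zero_pow hr0])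
    rintro (y | y) h
    · exact absurd h (graphG_not_adj_inl_inl _ _)
    · exact ⟨y, rfl⟩
  · refine hside Sum.inl Sum.inl_injective x ?_ (by simp [zero_pow hr0])
    rintro (y | y) h
    · exact ⟨y, rfl⟩
    · exact absurd h (graphG_not_adj_inr_inr _ _)

lemma graphG_connected [Fact p.Prime] (hr1 : 1 < r) (hr : r ∣ p - 1) :
    (graphG p r).Connected := by
  obtain ⟨s, hs, hs1⟩ := exists_zmod_pow_eq_one_ne_one hr1 hr
  have ht : 1 - s ≠ 0 := sub_ne_zero.mpr hs1.symm
  have hstep (x : ZMod p) : (graphG p r).Reachable (Sum.inl x) (Sum.inl (x + (1 - s))) := by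
    refine SimpleGraph.Adj.reachable (v := Sum.inr (x + 1)) (by simp) |>.trans
      (SimpleGraph.Adj.reachable ?_)
    rw [graphG_adj_inr_inl, show x + 1 - (x + (1 - s)) = s by ring, hs]
  have hinl (n : ℕ) : (graphG p r).Reachable (Sum.inl 0) (Sum.inl (n * (1 - s))) := by
    induction n with
    | zero => simp
    | succ n ih => simpa [add_mul] using ih.trans (hstep _)
  have hall (v : ZMod p ⊕ ZMod p) : (graphG p r).Reachable (Sum.inl 0) v := by
    have hx (x : ZMod p) : (graphG p r).Reachable (Sum.inl 0) (Sum.inl x) := by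
      simpa [ZMod.natCast_zmod_val, ht] using hinl (x * (1 - s)⁻¹).val
    rcases v with x | y
    · exact hx x
    · exact (hx (y - 1)).trans (SimpleGraph.Adj.reachable (by simp))
  exact { preconnected := fun u v => (hall u).symm.trans (hall v), nonempty := ⟨Sum.inl 0⟩ }

end GraphG

section Dihedral

variable {p r : ℕ}

def dihedralPerm (p : ℕ) : DihedralGroup p → Equiv.Perm (ZMod p ⊕ ZMod p)
  | .r i => Equiv.sumCongr (Equiv.subRight i) (Equiv.subRight i)
  | .sr i => (Equiv.sumCongr (Equiv.subLeft i) (Equiv.subLeft i)).trans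
      (Equiv.sumComm (ZMod p) (ZMod p))

def dihedralHom (p : ℕ) : DihedralGroup p →* Equiv.Perm (ZMod p ⊕ ZMod p) :=
  MonoidHom.mk' (dihedralPerm p) (by
    rintro (i | i) (j | j) <;> ext (x | x) <;>
      simp only [dihedralPerm, DihedralGroup.r_mul_r, DihedralGroup.r_mul_sr,
        DihedralGroup.sr_mul_r, DihedralGroup.sr_mul_sr, Equiv.Perm.mul_apply,
        Equiv.trans_apply, Equiv.sumCongr_apply, Sum.map_inl, Sum.map_inr,
        Equiv.sumComm_apply, Sum.swap_inl, Sum.swap_inr, Equiv.subRight_apply,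
        Equiv.subLeft_apply, Sum.inl.injEq, Sum.inr.injEq] <;> ring)

@[simp] lemma dihedralHom_r_inl (i x : ZMod p) :
    dihedralHom p (.r i) (Sum.inl x) = Sum.inl (x - i) := rfl
@[simp] lemma dihedralHom_r_inr (i x : ZMod p) :
    dihedralHom p (.r i) (Sum.inr x) = Sum.inr (x - i) := rfl
@[simp] lemma dihedralHom_sr_inl (i x : ZMod p) :
    dihedralHom p (.sr i) (Sum.inl x) = Sum.inr (i - x) := rfl
@[simp] lemma dihedralHom_sr_inr (i x : ZMod p) :
    dihedralHom p (.sr i) (Sum.inr x) = Sum.inl (i - x) := rfl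

lemma dihedralHom_injective : Function.Injective (dihedralHom p) := by
  rw [injective_iff_map_eq_one]
  rintro (i | i) h <;> have h0 := congrArg (fun σ => σ (Sum.inl 0)) h
  · simp only [dihedralHom_r_inl, Equiv.Perm.one_apply, zero_sub, Sum.inl.injEq,
      neg_eq_zero] at h0
    rw [h0, DihedralGroup.one_def]
  · simp at h0

lemma dihedralHom_mem_autGroup (a : DihedralGroup p) :
    dihedralHom p a ∈ autGroup (graphG p r) := by
  rintro (x | x) (y | y) <;> cases a <;>
    simp only [dihedralHom_r_inl, dihedralHom_r_inr, dihedralHom_sr_inl, dihedralHom_sr_inr,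
      graphG_adj_inl_inr, graphG_adj_inr_inl, graphG_not_adj_inl_inl, graphG_not_adj_inr_inr,
      sub_sub_sub_cancel_right, sub_sub_sub_cancel_left]

lemma regularOn_range_dihedralHom : RegularOn (dihedralHom p).range := by
  constructor
  · rintro (x | x) (y | y)
    · exact ⟨_, ⟨.r (x - y), rfl⟩, by simp⟩
    · exact ⟨_, ⟨.sr (x + y), rfl⟩, by simp⟩
    · exact ⟨_, ⟨.sr (x + y), rfl⟩, by simp⟩
    · exact ⟨_, ⟨.r (x - y), rfl⟩, by simp⟩
  · rintro _ ⟨a | a, rfl⟩ hne (x | x)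
    all_goals simp only [dihedralHom_r_inl, dihedralHom_r_inr, dihedralHom_sr_inl,
      dihedralHom_sr_inr, ne_eq, Sum.inl.injEq, Sum.inr.injEq, sub_eq_self, reduceCtorEq,
      not_false_eq_true]
    all_goals rintro rfl; exact hne (by rw [← DihedralGroup.one_def, map_one])

lemma dihedralHom_r_one_pow (k : ℕ) : dihedralHom p (.r 1) ^ k = dihedralHom p (.r k) := by
  rw [← map_pow, DihedralGroup.r_one_pow]

lemma orderOf_dihedralHom_r_one : orderOf (dihedralHom p (.r 1)) = p := by
  rw [orderOf_injective _ dihedralHom_injective, DihedralGroup.orderOf_r_one]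

lemma isBicirculant_graphG [NeZero p] : IsBicirculant (graphG p r) := by
  refine ⟨_, dihedralHom_mem_autGroup (.r 1), ?_, Sum.inl 0, Sum.inr 0, ?_, fun k => ?_⟩
  · rw [orderOf_dihedralHom_r_one, card_zmod_sum_zmod]
  · rintro (x | x)
    · exact .inl ⟨(-x).val, by simp [dihedralHom_r_one_pow]⟩
    · exact .inr ⟨(-x).val, by simp [dihedralHom_r_one_pow]⟩
  · simp [dihedralHom_r_one_pow]

end Dihedral

section Circulant

variable {p r : ℕ}

lemma swap_mem_autGroup (hr : Even r) :
    Equiv.sumComm (ZMod p) (ZMod p) ∈ autGroup (graphG p r) := by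
  rintro (x | x) (y | y) <;>
    simp [← hr.neg_pow (y - x)]

lemma commute_swap_dihedralHom_r (i : ZMod p) :
    Commute (Equiv.sumComm (ZMod p) (ZMod p) : Equiv.Perm (ZMod p ⊕ ZMod p))
      (dihedralHom p (.r i)) := by
  ext (x | x) <;> rfl

lemma isCirculant_graphG (hodd : Odd p) (hr : Even r) : IsCirculant (graphG p r) := by
  have : NeZero p := ⟨hodd.pos.ne'⟩
  set ι : Equiv.Perm (ZMod p ⊕ ZMod p) := Equiv.sumComm (ZMod p) (ZMod p)
  set ρ := dihedralHom p (.r 1)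
  have hcomm : Commute ι ρ := commute_swap_dihedralHom_r 1
  have hι2 : ι ^ 2 = 1 := by ext (x | x) <;> rfl
  have hι : orderOf ι = 2 :=
    orderOf_eq_prime hι2 fun h => by simpa [ι] using congrArg (fun σ => σ (Sum.inl 0)) h
  have hρp : ρ ^ p = 1 := by
    rw [dihedralHom_r_one_pow, ZMod.natCast_self, ← DihedralGroup.one_def, map_one]
  have hpow_p : (ι * ρ) ^ p = ι := by
    rw [hcomm.mul_pow, hρp, mul_one, ← pow_mod_orderOf, hι, Nat.odd_iff.mp hodd, pow_one]
  have hpow_p_succ : (ι * ρ) ^ (p + 1) = ρ := by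
    rw [pow_succ, hpow_p, ← mul_assoc, ← sq, hι2, one_mul]
  -- `ι` and `ρ` are powers of `ι * ρ` because their orders `2` and `p` are coprime
  have hgen (a : ℕ) (i : ZMod p) : ∃ k, (ι * ρ) ^ k = ι ^ a * dihedralHom p (.r i) :=
    ⟨p * a + (p + 1) * i.val, by
      rw [pow_add, pow_mul, pow_mul, hpow_p, hpow_p_succ, dihedralHom_r_one_pow,
        ZMod.natCast_zmod_val]⟩
  refine ⟨ι * ρ, mul_mem (swap_mem_autGroup hr) (dihedralHom_mem_autGroup _), ?_, ?_⟩
  · rw [hcomm.orderOf_mul_eq_mul_orderOf_of_coprime, hι, orderOf_dihedralHom_r_one,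
      card_zmod_sum_zmod]
    rw [hι, orderOf_dihedralHom_r_one, Nat.coprime_two_left]
    exact hodd
  · rintro (x | x) (y | y)
    · obtain ⟨k, hk⟩ := hgen 0 (x - y); exact ⟨k, by simp [hk]⟩
    · obtain ⟨k, hk⟩ := hgen 1 (x - y); exact ⟨k, by simp [hk, ι]⟩
    · obtain ⟨k, hk⟩ := hgen 1 (x - y); exact ⟨k, by simp [hk, ι]⟩
    · obtain ⟨k, hk⟩ := hgen 0 (x - y); exact ⟨k, by simp [hk]⟩

end Circulant

section NotCirculant

variable {p r : ℕ} [Fact p.Prime]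

lemma eq_zpowers_of_isPGroup (hodd : Odd p) (hr1 : 1 < r) (hr : r ∣ p - 1)
    {Q : Subgroup (Equiv.Perm (ZMod p ⊕ ZMod p))} (hQ : Q ≤ autGroup (graphG p r))
    (hQp : IsPGroup p Q) (hρ : dihedralHom p (.r 1) ∈ Q) :
    Q = Subgroup.zpowers (dihedralHom p (.r 1)) := by
  have hp := (Fact.out : p.Prime)
  have hp3 : 3 ≤ p := by obtain ⟨m, rfl⟩ := hodd; have := hp.two_le; omega
  have hle : Subgroup.zpowers (dihedralHom p (.r 1)) ≤ Q := Subgroup.zpowers_le.mpr hρ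
  have hcardρ : Nat.card (Subgroup.zpowers (dihedralHom p (.r 1))) = p := by
    rw [Nat.card_zpowers, orderOf_dihedralHom_r_one]
  have hupper : Nat.card Q ≤ 2 * p :=
    (card_le_of_isPGroup (graphG_connected hr1 hr) (graphG_neighborSet_ncard_lt (by omega))
      hQ hQp).trans_eq (card_zmod_sum_zmod p)
  have hlower : p ≤ Nat.card Q := hcardρ.ge.trans (Subgroup.card_le_of_le hle)
  obtain ⟨n, hn⟩ := IsPGroup.iff_card.mp hQp
  have hn1 : n = 1 := by
    rw [hn] at hupper hlower
    rcases n with _ | _ | n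
    · simp at hlower; omega
    · rfl
    · have : p ^ 2 ≤ p ^ (n + 2) := Nat.pow_le_pow_right hp.pos (by omega)
      nlinarith
  exact (Subgroup.eq_of_le_of_card_ge hle (by rw [hn, hn1, pow_one, hcardρ])).symm

lemma exists_conj_mem_zpowers (hodd : Odd p) (hr1 : 1 < r) (hr : r ∣ p - 1)
    {η : Equiv.Perm (ZMod p ⊕ ZMod p)} (hη : η ∈ autGroup (graphG p r)) (hηp : η ^ p = 1) :
    ∃ γ ∈ autGroup (graphG p r), γ * η * γ⁻¹ ∈ Subgroup.zpowers (dihedralHom p (.r 1)) := by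
  set G := autGroup (graphG p r)
  set ρ : G := ⟨dihedralHom p (.r 1), dihedralHom_mem_autGroup _⟩
  have hρp : IsPGroup p (Subgroup.zpowers ρ) := IsPGroup.of_card (n := 1) <| by
    rw [Nat.card_zpowers, pow_one, ← orderOf_injective G.subtype Subtype.coe_injective ρ]
    exact orderOf_dihedralHom_r_one
  obtain ⟨P, hP⟩ := hρp.exists_le_sylow
  have hPρ : P.map G.subtype = Subgroup.zpowers (dihedralHom p (.r 1)) :=
    eq_zpowers_of_isPGroup hodd hr1 hr (Subgroup.map_subtype_le _) (P.2.map _)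
      ⟨ρ, hP (Subgroup.mem_zpowers ρ), rfl⟩
  obtain ⟨γ, hγ⟩ := exists_conj_mem_sylow P (g := ⟨η, hη⟩) (Subtype.ext hηp)
  exact ⟨γ, γ.2, hPρ ▸ ⟨_, hγ, rfl⟩⟩

lemma even_of_commute_of_transitive (hodd : Odd p) (hr1 : 1 < r) (hr : r ∣ p - 1)
    {τ : Equiv.Perm (ZMod p ⊕ ZMod p)} (hτ : τ ∈ autGroup (graphG p r))
    (hcomm : Commute τ (dihedralHom p (.r 1))) (htrans : ∀ v w, ∃ k : ℕ, (τ ^ k) v = w) :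
    Even r := by
  have hshift (i : ZMod p) (v : ZMod p ⊕ ZMod p) :
      τ (dihedralHom p (.r i) v) = dihedralHom p (.r i) (τ v) := by
    have := (hcomm.pow_right i.val).eq
    rw [dihedralHom_r_one_pow, ZMod.natCast_zmod_val] at this
    exact congrArg (· v) this
  have hinl (x : ZMod p) : τ (Sum.inl x) = dihedralHom p (.r (-x)) (τ (Sum.inl 0)) := by
    rw [← hshift]; simp
  have hinr (y : ZMod p) : τ (Sum.inr y) = dihedralHom p (.r (-y)) (τ (Sum.inr 0)) := by
    rw [← hshift]; simp
  obtain ⟨c, hc⟩ : ∃ c, τ (Sum.inl 0) = Sum.inr c := by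
    rcases h : τ (Sum.inl 0) with c | c
    · have hmaps : Set.MapsTo τ (Set.range Sum.inl) (Set.range Sum.inl) := by
        rintro _ ⟨x, rfl⟩
        rw [hinl, h]
        exact ⟨_, rfl⟩
      obtain ⟨k, hk⟩ := htrans (Sum.inl 0) (Sum.inr 0)
      obtain ⟨x, hx⟩ := hmaps.iterate k ⟨0, rfl⟩
      rw [Equiv.Perm.iterate_eq_pow, hk] at hx
      exact absurd hx Sum.inl_ne_inr
    · exact ⟨c, rfl⟩
  obtain ⟨d, hd⟩ : ∃ d, τ (Sum.inr 0) = Sum.inl d := by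
    rcases h : τ (Sum.inr 0) with d | d
    · exact ⟨d, rfl⟩
    · have : τ (Sum.inr (c - d)) = τ (Sum.inl 0) := by rw [hinr, h, hc]; simp
      exact absurd (τ.injective this) Sum.inr_ne_inl
  refine even_of_forall_sub_pow_eq_one_iff hodd hr1 hr (e := c - d) fun y => ?_
  have := hτ (Sum.inl 0) (Sum.inr y)
  rwa [hc, hinr, hd, dihedralHom_r_inl, graphG_adj_inr_inl, graphG_adj_inl_inr, sub_zero,
    sub_neg_eq_add, ← sub_sub] at this

lemma even_of_isCirculant (hodd : Odd p) (hr1 : 1 < r) (hr : r ∣ p - 1)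
    (h : IsCirculant (graphG p r)) : Even r := by
  obtain ⟨σ, hσ, hord, htrans⟩ := h
  rw [card_zmod_sum_zmod] at hord
  obtain ⟨γ, hγ, hconj⟩ := exists_conj_mem_zpowers hodd hr1 hr (pow_mem hσ 2)
    (by rw [← pow_mul, ← hord, pow_orderOf_eq_one])
  set τ := γ * σ * γ⁻¹
  have hτ2mem : τ ^ 2 ∈ Subgroup.zpowers (dihedralHom p (.r 1)) := by
    rw [conj_pow]; exact hconj
  have hτ2 : orderOf (τ ^ 2) = p := by
    rw [orderOf_pow, show τ = MulAut.conj γ σ from rfl, MulEquiv.orderOf_eq, hord,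
      Nat.gcd_mul_right_left, Nat.mul_div_cancel_left _ two_pos]
  have hzpowers : Subgroup.zpowers (τ ^ 2) = Subgroup.zpowers (dihedralHom p (.r 1)) :=
    Subgroup.eq_of_le_of_card_ge (Subgroup.zpowers_le.mpr hτ2mem) <| by
      rw [Nat.card_zpowers, Nat.card_zpowers, hτ2, orderOf_dihedralHom_r_one]
  have hcomm : Commute τ (dihedralHom p (.r 1)) := by
    obtain ⟨n, hn⟩ := hzpowers ▸ Subgroup.mem_zpowers (dihedralHom p (.r 1))
    exact hn ▸ ((Commute.refl τ).pow_right 2).zpow_right n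
  refine even_of_commute_of_transitive hodd hr1 hr
    (mul_mem (mul_mem hγ hσ) (inv_mem hγ)) hcomm fun v w => ?_
  obtain ⟨k, hk⟩ := htrans (γ⁻¹ v) (γ⁻¹ w)
  exact ⟨k, by rw [conj_pow, Equiv.Perm.mul_apply, Equiv.Perm.mul_apply, hk]; simp⟩

end NotCirculant

/-- **Lemma 2.3.** For an odd prime `p` and a divisor `r > 1` of `p - 1`, the graph
`G(2p,r)` is a Cayley graph of the dihedral group of order `2p` (its automorphism group
contains a regular dihedral subgroup of order `2p`), hence a bicirculant; and it is a
circulant iff `r` is even. -/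
theorem stmt2 (p r : ℕ) (hp : p.Prime) (hodd : Odd p) (hr1 : 1 < r) (hr : r ∣ p - 1) :
    (∃ D : Subgroup (Equiv.Perm (ZMod p ⊕ ZMod p)), D ≤ autGroup (graphG p r) ∧
      RegularOn D ∧ Nonempty (↥D ≃* DihedralGroup p)) ∧
    IsBicirculant (graphG p r) ∧
    (IsCirculant (graphG p r) ↔ Even r) := by
  have : Fact p.Prime := ⟨hp⟩
  refine ⟨⟨(dihedralHom p).range, ?_, regularOn_range_dihedralHom,
      ⟨(MonoidHom.ofInjective dihedralHom_injective).symm⟩⟩,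
    isBicirculant_graphG, even_of_isCirculant hodd hr1 hr, isCirculant_graphG hodd⟩
  rintro _ ⟨a, rfl⟩
  exact dihedralHom_mem_autGroup a

end ATB
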